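/- Let G be a countable linearly ordered group and let τ be a T1 topology on 𝓑⁺(G) such that (𝓑⁺(G), τ) is a Baire space and for every s ∈ 𝓑⁺(G) the left translation x ↦ s·x and the right translation x ↦ x·s are continuous. Then the topological space (𝓑⁺(G), τ) is discrete. -/

import Mathlib

/-- The multiplication of the bicyclic extension `𝓑(G) = G × G` of a linearly ordered
group `G`: `(a,b)·(c,d) = (c·b⁻¹·a, d)` if `b < c`; `(a,d)` if `b = c`;
`(a, b·c⁻¹·d)` if `b > c`. -/
def bmul {G : Type*} [Group G] [LinearOrder G] (s t : G × G) : G × G :=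
  if s.2 < t.1 then (t.1 * s.2⁻¹ * s.1, t.2)
  else if s.2 = t.1 then (s.1, t.2)
  else (s.1, s.2 * t.1⁻¹ * t.2)

/-- `𝓑⁺(G)` is closed under the multiplication of `𝓑(G)`. -/
theorem bmul_mem {G : Type*} [Group G] [LinearOrder G]
    [CovariantClass G G (· * ·) (· ≤ ·)]
    [CovariantClass G G (Function.swap (· * ·)) (· ≤ ·)]
    {s t : G × G} (hs : 1 ≤ s.1 ∧ 1 ≤ s.2) (ht : 1 ≤ t.1 ∧ 1 ≤ t.2) :
    1 ≤ (bmul s t).1 ∧ 1 ≤ (bmul s t).2 := by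
  unfold bmul
  split_ifs with h1 h2
  · refine ⟨?_, ht.2⟩
    have hb : (1 : G) ≤ t.1 * s.2⁻¹ := by
      have := mul_le_mul' h1.le (le_refl s.2⁻¹)
      rwa [mul_inv_cancel] at this
    calc (1 : G) = 1 * 1 := (one_mul 1).symm
    _ ≤ (t.1 * s.2⁻¹) * s.1 := mul_le_mul' hb hs.1
  · exact ⟨hs.1, ht.2⟩
  · refine ⟨hs.1, ?_⟩
    have hlt : t.1 < s.2 := lt_of_le_of_ne (not_lt.mp h1) (fun h => h2 h.symm)
    have hb : (1 : G) ≤ s.2 * t.1⁻¹ := by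
      have := mul_le_mul' hlt.le (le_refl t.1⁻¹)
      rwa [mul_inv_cancel] at this
    calc (1 : G) = 1 * 1 := (one_mul 1).symm
    _ ≤ (s.2 * t.1⁻¹) * t.2 := mul_le_mul' hb ht.2

/-- The subsemigroup `𝓑⁺(G)` of `𝓑(G)`, consisting of all pairs `(a,b)` with
`1 ≤ a` and `1 ≤ b`, as a type. -/
def BPlus (G : Type*) [Group G] [LinearOrder G] : Type _ :=
  {p : G × G // 1 ≤ p.1 ∧ 1 ≤ p.2}

/-- The multiplication on `𝓑⁺(G)`, inherited from `𝓑(G)`. -/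
def bmulPos {G : Type*} [Group G] [LinearOrder G]
    [CovariantClass G G (· * ·) (· ≤ ·)]
    [CovariantClass G G (Function.swap (· * ·)) (· ≤ ·)]
    (s t : BPlus G) : BPlus G :=
  ⟨bmul s.1 t.1, bmul_mem s.2 t.2⟩

/-!
A countable T₁ Baire space has an isolated point in every nonempty open set, which would
otherwise be a countable union of nowhere dense singletons. By separate continuity, the
fibre of a translation over an isolated point is open. The fibre of `x ↦ (w₁, 1)·x·(1, w₂)`
over an isolated `w` is `{(1, 1)}`; for `q₁ > 1` the fibre of `x ↦ (1, s)·x` over `q` is the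
single point `(q₁s, q₂)`, and symmetrically on the right, so isolatedness spreads upwards
from any isolated point with both coordinates `> 1`. Finally, the fibre of
`x ↦ (1, p₁)·x·(p₂, 1)` over `(1, 1)` is an open line through `p` lying below `p`. Baire
again gives an isolated point on it other than its at most two points with a coordinate
equal to `1`, and `p` lies above it.
-/

section Algebra

variable {G : Type*} [Group G] [LinearOrder G]

theorem bmul_of_lt {s t : G × G} (h : s.2 < t.1) : bmul s t = (t.1 * s.2⁻¹ * s.1, t.2) :=
  if_pos h

theorem bmul_of_eq {s t : G × G} (h : s.2 = t.1) : bmul s t = (s.1, t.2) := by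
  simp [bmul, h]

theorem bmul_of_gt {s t : G × G} (h : t.1 < s.2) : bmul s t = (s.1, s.2 * t.1⁻¹ * t.2) := by
  simp [bmul, h.not_gt, h.ne']

theorem mk_one_bmul (u : G) {x : G × G} (hx : 1 ≤ x.1) : bmul (u, 1) x = (x.1 * u, x.2) := by
  rcases hx.lt_or_eq with h | h
  · simp [bmul_of_lt (s := (u, 1)) h]
  · simp [bmul_of_eq (s := (u, 1)) h, ← h]

theorem bmul_one_mk (v : G) {a b : G} (hb : 1 ≤ b) : bmul (a, b) (1, v) = (a, b * v) := by
  rcases hb.lt_or_eq with h | rfl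
  · simp [bmul_of_gt (s := (a, b)) (t := (1, v)) h]
  · simp [bmul_of_eq (s := (a, 1)) (t := (1, v)) rfl]

variable [CovariantClass G G (Function.swap (· * ·)) (· ≤ ·)]

theorem one_mk_bmul_eq_iff (s : G) {x y : G × G} (hy : 1 < y.1) :
    bmul (1, s) x = y ↔ x = (y.1 * s, y.2) := by
  obtain ⟨c, d⟩ := x
  have hs : s < y.1 * s := lt_mul_of_one_lt_left' s hy
  rcases lt_trichotomy s c with h | rfl | h
  · rw [bmul_of_lt (s := (1, s)) h, mul_one, Prod.ext_iff, Prod.ext_iff, mul_inv_eq_iff_eq_mul]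
  · rw [bmul_of_eq (s := (1, s)) (t := (s, d)) rfl]
    exact iff_of_false (fun e => hy.ne (congrArg Prod.fst e))
      (fun e => hs.ne (congrArg Prod.fst e))
  · rw [bmul_of_gt (s := (1, s)) h]
    exact iff_of_false (fun e => hy.ne (congrArg Prod.fst e))
      (fun e => (hs.trans_eq (congrArg Prod.fst e).symm).asymm h)

theorem bmul_mk_one_eq_iff (t : G) {x y : G × G} (hy : 1 < y.2) :
    bmul x (t, 1) = y ↔ x = (y.1, y.2 * t) := by
  obtain ⟨c, d⟩ := x
  have ht : t < y.2 * t := lt_mul_of_one_lt_left' t hy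
  rcases lt_trichotomy d t with h | rfl | h
  · rw [bmul_of_lt (t := (t, 1)) h]
    exact iff_of_false (fun e => hy.ne (congrArg Prod.snd e))
      (fun e => (ht.trans_eq (congrArg Prod.snd e).symm).asymm h)
  · rw [bmul_of_eq (s := (c, d)) (t := (d, 1)) rfl]
    exact iff_of_false (fun e => hy.ne (congrArg Prod.snd e))
      (fun e => ht.ne (congrArg Prod.snd e))
  · rw [bmul_of_gt (t := (t, 1)) h, mul_one, Prod.ext_iff, Prod.ext_iff, mul_inv_eq_iff_eq_mul]

theorem one_le_snd_bmul_mk_one (x : G × G) (b : G) : 1 ≤ (bmul x (b, 1)).2 := by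
  rcases lt_trichotomy x.2 b with h | h | h
  · simp [bmul_of_lt (t := (b, 1)) h]
  · simp [bmul_of_eq (t := (b, 1)) h]
  · rw [bmul_of_gt (t := (b, 1)) h, mul_one]
    exact le_mul_inv_iff_le.2 h.le

theorem bmul_mk_one_eq_mk_one_iff (a b : G) (x : G × G) :
    bmul x (b, 1) = (a, 1) ↔ x = (a, b) ∨ x.2 < b ∧ x.1 = x.2 * b⁻¹ * a := by
  obtain ⟨c, d⟩ := x
  rcases lt_trichotomy d b with h | rfl | h
  · rw [bmul_of_lt (t := (b, 1)) h]
    simp only [Prod.mk.injEq, and_true, h.ne, and_false, h, true_and, false_or]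
    constructor <;> rintro rfl <;> group
  · simp [bmul_of_eq (s := (c, d)) (t := (d, 1)) rfl]
  · rw [bmul_of_gt (t := (b, 1)) h, mul_one]
    refine iff_of_false (fun e => (lt_mul_inv_iff_lt.2 h).ne' (congrArg Prod.snd e)) ?_
    rintro (e | ⟨h', -⟩)
    · exact h.ne' (congrArg Prod.snd e)
    · exact h.asymm h'

variable [CovariantClass G G (· * ·) (· ≤ ·)]

theorem one_mk_bmul_eq_one_iff (a : G) {y : G × G} (hy : 1 ≤ y.2) :
    bmul (1, a) y = (1, 1) ↔ y = (a, 1) := by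
  obtain ⟨p, q⟩ := y
  rcases lt_trichotomy a p with h | rfl | h
  · rw [bmul_of_lt (s := (1, a)) h, mul_one]
    exact iff_of_false (fun e => (lt_mul_inv_iff_lt.2 h).ne' (congrArg Prod.fst e))
      (fun e => h.ne' (congrArg Prod.fst e))
  · simp [bmul_of_eq (s := (1, a)) (t := (a, q)) rfl]
  · rw [bmul_of_gt (s := (1, a)) h]
    refine iff_of_false (fun e => ?_) (fun e => h.ne (congrArg Prod.fst e))
    exact ((lt_mul_inv_iff_lt.2 h).trans_le (le_mul_of_one_le_right' hy)).ne'
      (congrArg Prod.snd e)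

end Algebra

theorem exists_isOpen_singleton_mem {X : Type*} [TopologicalSpace X] [T1Space X] [BaireSpace X]
    [Countable X] {U : Set X} (hU : IsOpen U) (hne : U.Nonempty) : ∃ x ∈ U, IsOpen {x} := by
  have hU' : ¬IsMeagre (⋃ x ∈ U, {x}) := by
    rw [Set.biUnion_of_singleton]
    exact not_isMeagre_of_isOpen hU hne
  obtain ⟨x, hx, hx'⟩ := exists_of_not_isMeagre_biUnion U.to_countable hU'
  refine ⟨x, hx, by_contra fun h => hx' (IsNowhereDense.isMeagre ?_)⟩
  rw [isClosed_singleton.isNowhereDense_iff, interior_eq_empty_iff_dense_compl]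
  exact dense_compl_singleton_iff_not_open.2 h

namespace BPlus

variable {G : Type*} [Group G] [LinearOrder G]

instance : One (BPlus G) := ⟨⟨(1, 1), le_rfl, le_rfl⟩⟩

instance [Countable G] : Countable (BPlus G) :=
  inferInstanceAs (Countable {p : G × G // 1 ≤ p.1 ∧ 1 ≤ p.2})

theorem ext_iff {x y : BPlus G} : x = y ↔ x.1 = y.1 := Subtype.ext_iff

def line (p : BPlus G) : Set (BPlus G) :=
  {x | x = p ∨ x.1.2 < p.1.2 ∧ x.1.1 = x.1.2 * p.1.2⁻¹ * p.1.1}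

theorem finite_line_diff_inter (p : BPlus G) :
    ((line p \ {p}) ∩ {x | x.1.1 = 1 ∨ x.1.2 = 1}).Finite := by
  refine ((Set.toFinite {(1, p.1.1⁻¹ * p.1.2), (p.1.2⁻¹ * p.1.1, 1)}).preimage
    Subtype.val_injective.injOn).subset ?_
  rintro x ⟨⟨hx | ⟨-, heq⟩, hxp⟩, h1 | h1⟩
  · exact absurd hx hxp
  · exact absurd hx hxp
  · refine Or.inl (Prod.ext h1 ?_)
    calc x.1.2 = x.1.2 * p.1.2⁻¹ * p.1.1 * (p.1.1⁻¹ * p.1.2) := by group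
      _ = p.1.1⁻¹ * p.1.2 := by rw [← heq, h1, one_mul]
  · exact Or.inr (Prod.ext (by rw [heq, h1, one_mul]) h1)

variable [CovariantClass G G (Function.swap (· * ·)) (· ≤ ·)]

theorem le_of_mem_line {p x : BPlus G} (hx : x ∈ line p) :
    x.1.1 ≤ p.1.1 ∧ x.1.2 ≤ p.1.2 := by
  rcases hx with rfl | ⟨hlt, heq⟩
  · exact ⟨le_rfl, le_rfl⟩
  refine ⟨?_, hlt.le⟩
  rw [heq]
  exact mul_le_of_le_one_left' (mul_inv_le_one_iff_le.2 hlt.le)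

variable [CovariantClass G G (· * ·) (· ≤ ·)] [TopologicalSpace (BPlus G)]

theorem isOpen_singleton_one (hl : ∀ s : BPlus G, Continuous fun x : BPlus G => bmulPos s x)
    (hr : ∀ s : BPlus G, Continuous fun x : BPlus G => bmulPos x s) {w : BPlus G}
    (hw : IsOpen {w}) : IsOpen ({1} : Set (BPlus G)) := by
  let u : BPlus G := ⟨(w.1.1, 1), w.2.1, le_rfl⟩
  let v : BPlus G := ⟨(1, w.1.2), le_rfl, w.2.2⟩
  have hfib : (fun x => bmulPos (bmulPos u x) v) ⁻¹' {w} = {1} := by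
    ext x
    simp only [Set.mem_preimage, Set.mem_singleton_iff, ext_iff]
    show bmul (bmul (w.1.1, 1) x.1) (1, w.1.2) = w.1 ↔ x.1 = (1, 1)
    rw [mk_one_bmul _ x.2.1, bmul_one_mk _ x.2.2]
    simp [Prod.ext_iff]
  exact hfib ▸ hw.preimage ((hr v).comp (hl u))

theorem isOpen_singleton_of_fst_le
    (hl : ∀ s : BPlus G, Continuous fun x : BPlus G => bmulPos s x) {q p : BPlus G}
    (hq : IsOpen {q}) (hq1 : 1 < q.1.1) (hle : q.1.1 ≤ p.1.1)
    (heq : p.1.2 = q.1.2) : IsOpen {p} := by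
  let s : BPlus G := ⟨(1, q.1.1⁻¹ * p.1.1), le_rfl, le_inv_mul_iff_le.2 hle⟩
  have hfib : (fun x => bmulPos s x) ⁻¹' {q} = {p} := by
    ext x
    simp only [Set.mem_preimage, Set.mem_singleton_iff, ext_iff]
    show bmul (1, q.1.1⁻¹ * p.1.1) x.1 = q.1 ↔ x.1 = p.1
    rw [one_mk_bmul_eq_iff _ hq1, mul_inv_cancel_left, ← heq]
  exact hfib ▸ hq.preimage (hl s)

theorem isOpen_singleton_of_snd_le
    (hr : ∀ s : BPlus G, Continuous fun x : BPlus G => bmulPos x s) {q p : BPlus G}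
    (hq : IsOpen {q}) (hq2 : 1 < q.1.2) (hle : q.1.2 ≤ p.1.2)
    (heq : p.1.1 = q.1.1) : IsOpen {p} := by
  let t : BPlus G := ⟨(q.1.2⁻¹ * p.1.2, 1), le_inv_mul_iff_le.2 hle, le_rfl⟩
  have hfib : (fun x => bmulPos x t) ⁻¹' {q} = {p} := by
    ext x
    simp only [Set.mem_preimage, Set.mem_singleton_iff, ext_iff]
    show bmul x.1 (q.1.2⁻¹ * p.1.2, 1) = q.1 ↔ x.1 = p.1
    rw [bmul_mk_one_eq_iff _ hq2, mul_inv_cancel_left, ← heq]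
  exact hfib ▸ hq.preimage (hr t)

theorem isOpen_singleton_of_le (hl : ∀ s : BPlus G, Continuous fun x : BPlus G => bmulPos s x)
    (hr : ∀ s : BPlus G, Continuous fun x : BPlus G => bmulPos x s) {q p : BPlus G}
    (hq : IsOpen {q}) (hq1 : 1 < q.1.1) (hq2 : 1 < q.1.2) (hle1 : q.1.1 ≤ p.1.1)
    (hle2 : q.1.2 ≤ p.1.2) : IsOpen {p} :=
  let r : BPlus G := ⟨(p.1.1, q.1.2), p.2.1, q.2.2⟩
  isOpen_singleton_of_snd_le hr (q := r) (isOpen_singleton_of_fst_le hl hq hq1 hle1 rfl)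
    hq2 hle2 rfl

theorem isOpen_line (hl : ∀ s : BPlus G, Continuous fun x : BPlus G => bmulPos s x)
    (hr : ∀ s : BPlus G, Continuous fun x : BPlus G => bmulPos x s)
    (h1 : IsOpen ({1} : Set (BPlus G))) (p : BPlus G) : IsOpen (line p) := by
  let s : BPlus G := ⟨(1, p.1.1), le_rfl, p.2.1⟩
  let t : BPlus G := ⟨(p.1.2, 1), p.2.2, le_rfl⟩
  have hfib : (fun x => bmulPos s (bmulPos x t)) ⁻¹' {1} = line p := by
    ext x
    simp only [Set.mem_preimage, Set.mem_singleton_iff, ext_iff]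
    show bmul (1, p.1.1) (bmul x.1 (p.1.2, 1)) = (1, 1) ↔ x ∈ line p
    rw [one_mk_bmul_eq_one_iff _ (one_le_snd_bmul_mk_one _ _), bmul_mk_one_eq_mk_one_iff,
      Prod.mk.eta, ← ext_iff]
    rfl
  exact hfib ▸ h1.preimage ((hl s).comp (hr t))

end BPlus

/-- Theorem 3.2 for `𝓑⁺(G)`: for a countable linearly ordered group `G`, every Baire
`T₁`-topology on `𝓑⁺(G)` with separately continuous multiplication is discrete. -/
theorem baire_t1_implies_discrete_pos {G : Type*} [Group G] [LinearOrder G]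
    [CovariantClass G G (· * ·) (· ≤ ·)]
    [CovariantClass G G (Function.swap (· * ·)) (· ≤ ·)]
    [Countable G]
    [TopologicalSpace (BPlus G)] [T1Space (BPlus G)] [BaireSpace (BPlus G)]
    (hl : ∀ s : BPlus G, Continuous fun x : BPlus G => bmulPos s x)
    (hr : ∀ s : BPlus G, Continuous fun x : BPlus G => bmulPos x s) :
    DiscreteTopology (BPlus G) := by
  obtain ⟨w, -, hw⟩ := exists_isOpen_singleton_mem isOpen_univ ⟨(1 : BPlus G), trivial⟩
  have h1 := BPlus.isOpen_singleton_one hl hr hw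
  refine discreteTopology_iff_isOpen_singleton.2 fun p => ?_
  obtain ⟨x, ⟨hxL, hxD⟩, hx⟩ := exists_isOpen_singleton_mem
    ((BPlus.isOpen_line hl hr h1 p).sdiff (BPlus.finite_line_diff_inter p).isClosed)
    ⟨p, Or.inl rfl, fun h => h.1.2 rfl⟩
  obtain rfl | hxp := eq_or_ne x p
  · exact hx
  have hx1 : x.1.1 ≠ 1 := fun h => hxD ⟨⟨hxL, hxp⟩, Or.inl h⟩
  have hx2 : x.1.2 ≠ 1 := fun h => hxD ⟨⟨hxL, hxp⟩, Or.inr h⟩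
  exact BPlus.isOpen_singleton_of_le hl hr hx (x.2.1.lt_of_ne' hx1) (x.2.2.lt_of_ne' hx2)
    (BPlus.le_of_mem_line hxL).1 (BPlus.le_of_mem_line hxL).2
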